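/- Let d ≥ 1 and let (p,q,r) ∈ [1,∞]³ be a Hölder triple, i.e. 1/p + 1/q = 1/r. Let p′ and q′ denote the Hölder conjugates of p and q. If the tensor Θ: ℤ^d × ℤ^d × ℤ^d → ℂ has finite mixed norm ‖Θ‖_{ℓ^r_j ℓ^{p′}_k ℓ^{q′}_ℓ} := ( Σ_{j∈ℤ^d} ( Σ_{k∈ℤ^d} ( Σ_{ℓ∈ℤ^d} |Θ(j,k,ℓ)|^{q′} )^{p′/q′} )^{r/p′} )^{1/r} < ∞ (with the usual modifications when an exponent is ∞), then the discrete bilinear operator 𝒯_Θ is bounded from ℓ^p(ℤ^d) × ℓ^q(ℤ^d) to ℓ^r(ℤ^d); more precisely, ‖𝒯_Θ(f,g)‖_{ℓ^r} ≤ ‖Θ‖_{ℓ^r_j ℓ^{p′}_k ℓ^{q′}_ℓ} ‖f‖_{ℓ^p} ‖g‖_{ℓ^q} for all f ∈ ℓ^p(ℤ^d) and g ∈ ℓ^q(ℤ^d). -/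

import Mathlib

open scoped ENNReal NNReal BigOperators

noncomputable section

/-- The integer lattice `ℤ^d`. -/
abbrev Zd (d : ℕ) := Fin d → ℤ

/-- Euclidean norm `|j|` of an integer vector `j ∈ ℤ^d`. -/
def znorm {d : ℕ} (j : Zd d) : ℝ := Real.sqrt (∑ i, ((j i : ℝ)) ^ 2)

/-- Euclidean norm of a real vector. -/
def rnorm {d : ℕ} (x : Fin d → ℝ) : ℝ := Real.sqrt (∑ i, (x i) ^ 2)

/-- Japanese bracket `⟨x⟩ = (1 + x²)^{1/2}`. -/
def jb (x : ℝ) : ℝ := Real.sqrt (1 + x ^ 2)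

/-- The discrete bilinear operator `𝒯_Θ` (named `Tbil` here) associated with an infinite tensor `Θ`:
`(𝒯_Θ(f,g))_j = Σ_k Σ_ℓ Θ(j,k,ℓ) f_k g_ℓ`. -/
def Tbil {d : ℕ} (Θ : Zd d → Zd d → Zd d → ℂ) (f g : Zd d → ℂ) : Zd d → ℂ :=
  fun j => ∑' k, ∑' l, Θ j k l * f k * g l

/-- `ℓ^p`-type norm (extended-real valued) of a family of nonnegative extended reals,
with the usual modification (supremum) when `p = ∞`. -/
def nestNorm {ι : Type*} (p : ℝ≥0∞) (F : ι → ℝ≥0∞) : ℝ≥0∞ :=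
  if p = ∞ then ⨆ i, F i else (∑' i, F i ^ p.toReal) ^ (1 / p.toReal)

/-- The weighted `ℓ^p_s(ℤ^d)` norm `(Σ_k ⟨k⟩^{sp} |f_k|^p)^{1/p}`. -/
def wlpNorm {d : ℕ} (p : ℝ≥0∞) (s : ℝ) (f : Zd d → ℂ) : ℝ≥0∞ :=
  nestNorm p fun k => ENNReal.ofReal (jb (znorm k) ^ s * ‖f k‖)

/-- The `ℓ^p(ℤ^d)` norm. -/
def lpNorm {d : ℕ} (p : ℝ≥0∞) (f : Zd d → ℂ) : ℝ≥0∞ :=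
  nestNorm p fun k => ENNReal.ofReal ‖f k‖

/-- The tensor norm `‖Θ‖_{ω,N} = sup_{j,k,ℓ} |Θ(j,k,ℓ)| ⟨|j−k|+|j−ℓ|⟩^{2N} /
(⟨|j|+|k|⟩^ω ⟨|j|+|ℓ|⟩^ω)`. -/
def tensorNorm {d : ℕ} (ω N : ℝ) (Θ : Zd d → Zd d → Zd d → ℂ) : ℝ≥0∞ :=
  ⨆ j, ⨆ k, ⨆ l, ENNReal.ofReal
    (‖Θ j k l‖ * jb (znorm (j - k) + znorm (j - l)) ^ (2 * N) /
      (jb (znorm j + znorm k) ^ ω * jb (znorm j + znorm l) ^ ω))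

/-- The tensor norm `‖Θ‖_{ω₁,ω₂,N}`. -/
def tensorNorm2 {d : ℕ} (ω₁ ω₂ N : ℝ) (Θ : Zd d → Zd d → Zd d → ℂ) : ℝ≥0∞ :=
  ⨆ j, ⨆ k, ⨆ l, ENNReal.ofReal
    (‖Θ j k l‖ * jb (znorm (j - k) + znorm (j - l)) ^ (2 * N) /
      (jb (znorm j + znorm k) ^ ω₁ * jb (znorm j + znorm l) ^ ω₂))

/-- The tensor norm `‖Θ‖_{0,0,ω,N} = sup_{j,k,ℓ} |Θ(j,k,ℓ)| ⟨|j−k|+|j−ℓ|⟩^{2N} /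
⟨|j|+|k|+|ℓ|⟩^ω`. -/
def tensorNorm00 {d : ℕ} (ω N : ℝ) (Θ : Zd d → Zd d → Zd d → ℂ) : ℝ≥0∞ :=
  ⨆ j, ⨆ k, ⨆ l, ENNReal.ofReal
    (‖Θ j k l‖ * jb (znorm (j - k) + znorm (j - l)) ^ (2 * N) /
      jb (znorm j + znorm k + znorm l) ^ ω)

/-- The first bilinear commutator `[𝒯_Θ, b]₁(f,g) = 𝒯_Θ(bf, g) − b·𝒯_Θ(f,g)`. -/
def comm1 {d : ℕ} (Θ : Zd d → Zd d → Zd d → ℂ) (b f g : Zd d → ℂ) : Zd d → ℂ :=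
  fun j => Tbil Θ (fun k => b k * f k) g j - b j * Tbil Θ f g j

/-- The second bilinear commutator `[𝒯_Θ, b]₂(f,g) = 𝒯_Θ(f, bg) − b·𝒯_Θ(f,g)`. -/
def comm2 {d : ℕ} (Θ : Zd d → Zd d → Zd d → ℂ) (b f g : Zd d → ℂ) : Zd d → ℂ :=
  fun j => Tbil Θ f (fun l => b l * g l) j - b j * Tbil Θ f g j

/-- One-step finite difference in the variables `(j,k)`, with shift `v ∈ ℤ^d`:
`(D2 v Θ)(j,k,ℓ) = Θ(j+v, k+v, ℓ) − Θ(j,k,ℓ)`. -/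
def D2 {d : ℕ} (v : Zd d) (Θ : Zd d → Zd d → Zd d → ℂ) : Zd d → Zd d → Zd d → ℂ :=
  fun j k l => Θ (j + v) (k + v) l - Θ j k l

/-- One-step finite difference in the variables `(j,ℓ)`, with shift `v ∈ ℤ^d`:
`(D3 v Θ)(j,k,ℓ) = Θ(j+v, k, ℓ+v) − Θ(j,k,ℓ)`. -/
def D3 {d : ℕ} (v : Zd d) (Θ : Zd d → Zd d → Zd d → ℂ) : Zd d → Zd d → Zd d → ℂ :=
  fun j k l => Θ (j + v) k (l + v) - Θ j k l

/-- The iterated partial finite difference operator `Δ₂^α` for `α ∈ ℤ^d`: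
in direction `m`, `Δ_{2,m}^t = (Δ₂^{m, sign t})^{|t|}`. -/
def Delta2 {d : ℕ} (α : Zd d) (Θ : Zd d → Zd d → Zd d → ℂ) : Zd d → Zd d → Zd d → ℂ :=
  (List.finRange d).foldr
    (fun m F => (D2 (Pi.single m (Int.sign (α m))))^[(α m).natAbs] ∘ F) id Θ

/-- The iterated partial finite difference operator `Δ₃^β` for `β ∈ ℤ^d`. -/
def Delta3 {d : ℕ} (β : Zd d) (Θ : Zd d → Zd d → Zd d → ℂ) : Zd d → Zd d → Zd d → ℂ :=
  (List.finRange d).foldr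
    (fun m F => (D3 (Pi.single m (Int.sign (β m))))^[(β m).natAbs] ∘ F) id Θ

/-- `|α| = Σ_m |α_m|` for `α ∈ ℤ^d`. -/
def l1norm {d : ℕ} (α : Zd d) : ℝ := ∑ m, |(α m : ℝ)|

/-- The bilinear tensor class `BT^{ω,N}(ℤ^d)`:
`|Δ₂^α Δ₃^β Θ(j,k,ℓ)| ≤ C_{N,α,β} ⟨|j|+|k|+|ℓ|⟩^{ω−|α|−|β|} ⟨|j−k|+|j−ℓ|⟩^{−2N}`. -/
def BT {d : ℕ} (ω : ℝ) (N : ℕ) (Θ : Zd d → Zd d → Zd d → ℂ) : Prop :=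
  ∀ α β : Zd d, ∃ C : ℝ, 0 < C ∧ ∀ j k l : Zd d,
    ‖Delta2 α (Delta3 β Θ) j k l‖ ≤
      C * jb (znorm j + znorm k + znorm l) ^ (ω - l1norm α - l1norm β) *
        jb (znorm (j - k) + znorm (j - l)) ^ (-(2 * (N : ℝ)))

/-- The bilinear tensor class of order zero, `BT^0(ℤ^d) = ∪_{N > d} BT^{0,N}(ℤ^d)`. -/
def BT0 {d : ℕ} (Θ : Zd d → Zd d → Zd d → ℂ) : Prop :=
  ∃ N : ℕ, d < N ∧ BT 0 N Θ

/-- Directional derivative of a function on `ℝ^d × ℝ^d` in the direction `v`. -/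
def pDeriv {d : ℕ} (v : (Fin d → ℝ) × (Fin d → ℝ))
    (F : (Fin d → ℝ) × (Fin d → ℝ) → ℂ) : (Fin d → ℝ) × (Fin d → ℝ) → ℂ :=
  fun p => fderiv ℝ F p v

/-- Iterated partial derivative `∂_x^α` in the first group of variables. -/
def pdx {d : ℕ} (α : Fin d → ℕ) :
    ((Fin d → ℝ) × (Fin d → ℝ) → ℂ) → (Fin d → ℝ) × (Fin d → ℝ) → ℂ :=
  (List.finRange d).foldr (fun m G => (pDeriv (Pi.single m 1, 0))^[α m] ∘ G) id

/-- Iterated partial derivative `∂_y^β` in the second group of variables. -/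
def pdy {d : ℕ} (β : Fin d → ℕ) :
    ((Fin d → ℝ) × (Fin d → ℝ) → ℂ) → (Fin d → ℝ) × (Fin d → ℝ) → ℂ :=
  (List.finRange d).foldr (fun m G => (pDeriv (0, Pi.single m 1))^[β m] ∘ G) id

/-!
For fixed `j`, Hölder's inequality in `ℓ` and then in `k` gives the pointwise bound
`|𝒯_Θ(f,g)_j| ≤ ‖Θ(j,·,·)‖_{ℓ^{p′}_k ℓ^{q′}_ℓ} ‖f‖_{ℓ^p} ‖g‖_{ℓ^q}`; taking the `ℓ^r` norm in `j`
gives the estimate.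
-/

namespace ENNReal

theorem tsum_mul_le_Lp_mul_Lq {ι : Type*} (f g : ι → ℝ≥0∞) {p q : ℝ}
    (hpq : p.HolderConjugate q) :
    ∑' i, f i * g i ≤ (∑' i, f i ^ p) ^ (1 / p) * (∑' i, g i ^ q) ^ (1 / q) := by
  have hp : 0 ≤ 1 / p := hpq.one_div_pos.le
  have hq : 0 ≤ 1 / q := hpq.symm.one_div_pos.le
  rw [ENNReal.tsum_eq_iSup_sum]
  refine iSup_le fun s => (ENNReal.inner_le_Lp_mul_Lq s f g hpq).trans ?_
  gcongr <;> exact ENNReal.sum_le_tsum s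

end ENNReal

section nestNorm

variable {ι : Type*}

@[simp]
lemma nestNorm_top (F : ι → ℝ≥0∞) : nestNorm ∞ F = ⨆ i, F i := if_pos rfl

lemma nestNorm_of_ne_top {p : ℝ≥0∞} (hp : p ≠ ∞) (F : ι → ℝ≥0∞) :
    nestNorm p F = (∑' i, F i ^ p.toReal) ^ (1 / p.toReal) := if_neg hp

@[simp]
lemma nestNorm_one (F : ι → ℝ≥0∞) : nestNorm 1 F = ∑' i, F i := by
  simp [nestNorm_of_ne_top ENNReal.one_ne_top]

lemma tsum_mul_le_nestNorm_top_mul_nestNorm_one (a b : ι → ℝ≥0∞) :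
    ∑' i, a i * b i ≤ nestNorm ∞ a * nestNorm 1 b := by
  rw [nestNorm_top, nestNorm_one, ← ENNReal.tsum_mul_left]
  exact ENNReal.tsum_le_tsum fun i => mul_le_mul_left (le_iSup a i) _

lemma tsum_mul_le_nestNorm_mul_nestNorm {p q : ℝ≥0∞} [hpq : p.HolderConjugate q]
    (a b : ι → ℝ≥0∞) : ∑' i, a i * b i ≤ nestNorm p a * nestNorm q b := by
  obtain rfl | hp := eq_or_ne p ∞
  · obtain rfl : q = 1 := (ENNReal.HolderConjugate.eq_top_iff_eq_one ∞ q).mp rfl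
    exact tsum_mul_le_nestNorm_top_mul_nestNorm_one a b
  obtain rfl | hq := eq_or_ne q ∞
  · obtain rfl : p = 1 := (ENNReal.HolderConjugate.eq_top_iff_eq_one ∞ p).mp rfl
    simpa only [mul_comm] using tsum_mul_le_nestNorm_top_mul_nestNorm_one b a
  rw [nestNorm_of_ne_top hp, nestNorm_of_ne_top hq]
  exact ENNReal.tsum_mul_le_Lp_mul_Lq a b (ENNReal.HolderConjugate.toReal_of_ne_top hp hq)

lemma nestNorm_mono {p : ℝ≥0∞} {F G : ι → ℝ≥0∞} (h : ∀ i, F i ≤ G i) :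
    nestNorm p F ≤ nestNorm p G := by
  obtain rfl | hp := eq_or_ne p ∞
  · simpa only [nestNorm_top] using iSup_mono h
  rw [nestNorm_of_ne_top hp, nestNorm_of_ne_top hp]
  gcongr with i
  exact h i

lemma nestNorm_mul_const {p : ℝ≥0∞} (hp : p ≠ 0) (F : ι → ℝ≥0∞) (c : ℝ≥0∞) :
    nestNorm p (fun i => F i * c) = nestNorm p F * c := by
  obtain rfl | hp' := eq_or_ne p ∞
  · simp only [nestNorm_top, ENNReal.iSup_mul]
  have ht : 0 < p.toReal := ENNReal.toReal_pos hp hp'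
  rw [nestNorm_of_ne_top hp', nestNorm_of_ne_top hp']
  simp_rw [ENNReal.mul_rpow_of_nonneg _ _ ht.le, ENNReal.tsum_mul_right,
    ENNReal.mul_rpow_of_nonneg _ _ (one_div_nonneg.mpr ht.le), ← ENNReal.rpow_mul,
    mul_one_div_cancel ht.ne', ENNReal.rpow_one]

end nestNorm

lemma lpNorm_eq_nestNorm_enorm {d : ℕ} (p : ℝ≥0∞) (f : Zd d → ℂ) :
    lpNorm p f = nestNorm p fun k => ‖f k‖ₑ := by
  simp only [lpNorm, ofReal_norm]

lemma enorm_Tbil_le {d : ℕ} {p q p' q' : ℝ≥0∞} [p'.HolderConjugate p] [q'.HolderConjugate q]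
    (Θ : Zd d → Zd d → Zd d → ℂ) (f g : Zd d → ℂ) (j : Zd d) :
    ‖Tbil Θ f g j‖ₑ ≤
      nestNorm p' (fun k => nestNorm q' fun l => ‖Θ j k l‖ₑ) * lpNorm p f * lpNorm q g := by
  rw [lpNorm_eq_nestNorm_enorm, lpNorm_eq_nestNorm_enorm]
  calc ‖Tbil Θ f g j‖ₑ
      ≤ ∑' k, (∑' l, ‖Θ j k l‖ₑ * ‖g l‖ₑ) * ‖f k‖ₑ := by
        refine enorm_tsum_le_tsum_enorm.trans (ENNReal.tsum_le_tsum fun k => ?_)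
        rw [← ENNReal.tsum_mul_right]
        refine enorm_tsum_le_tsum_enorm.trans (ENNReal.tsum_le_tsum fun l => ?_)
        simp only [enorm_mul]
        exact (mul_right_comm _ _ _).le
    _ ≤ ∑' k, (nestNorm q' (fun l => ‖Θ j k l‖ₑ) * nestNorm q fun l => ‖g l‖ₑ) * ‖f k‖ₑ := by
        gcongr
        exact tsum_mul_le_nestNorm_mul_nestNorm _ _
    _ = (∑' k, nestNorm q' (fun l => ‖Θ j k l‖ₑ) * ‖f k‖ₑ) * nestNorm q fun l => ‖g l‖ₑ := by
        rw [← ENNReal.tsum_mul_right]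
        exact tsum_congr fun k => mul_right_comm _ _ _
    _ ≤ _ := by
        gcongr
        exact tsum_mul_le_nestNorm_mul_nestNorm _ _

theorem stmt_1_general {d : ℕ} (p q r p' q' : ℝ≥0∞)
    (hr : 1 ≤ r)
    (hp' : p⁻¹ + p'⁻¹ = 1) (hq' : q⁻¹ + q'⁻¹ = 1)
    (Θ : Zd d → Zd d → Zd d → ℂ)
    (f g : Zd d → ℂ) :
    lpNorm r (Tbil Θ f g) ≤
      nestNorm r (fun j : Zd d => nestNorm p' (fun k : Zd d =>
        nestNorm q' (fun l : Zd d => ENNReal.ofReal ‖Θ j k l‖))) *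
      lpNorm p f * lpNorm q g := by
  have : p'.HolderConjugate p := (ENNReal.holderConjugate_iff.mpr hp').symm
  have : q'.HolderConjugate q := (ENNReal.holderConjugate_iff.mpr hq').symm
  simp only [ofReal_norm]
  calc lpNorm r (Tbil Θ f g)
      ≤ nestNorm r (fun j => nestNorm p' (fun k => nestNorm q' fun l => ‖Θ j k l‖ₑ) *
          (lpNorm p f * lpNorm q g)) := by
        rw [lpNorm_eq_nestNorm_enorm]
        exact nestNorm_mono fun j => (enorm_Tbil_le Θ f g j).trans_eq (mul_assoc _ _ _)
    _ = _ := by rw [nestNorm_mul_const (one_pos.trans_le hr).ne', mul_assoc]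

/-- for a Hölder triple `(p,q,r)` and conjugates `p′, q′`, if the mixed norm
`‖Θ‖_{ℓ^r_j ℓ^{p′}_k ℓ^{q′}_ℓ}` is finite then `𝒯_Θ : ℓ^p × ℓ^q → ℓ^r` is bounded, with
`‖𝒯_Θ(f,g)‖_{ℓ^r} ≤ ‖Θ‖_{ℓ^r_j ℓ^{p′}_k ℓ^{q′}_ℓ} ‖f‖_{ℓ^p} ‖g‖_{ℓ^q}`. -/
theorem stmt_1 {d : ℕ} (hd : 1 ≤ d) (p q r p' q' : ℝ≥0∞)
    (hp : 1 ≤ p) (hq : 1 ≤ q) (hr : 1 ≤ r)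
    (hpqr : p⁻¹ + q⁻¹ = r⁻¹)
    (hp' : p⁻¹ + p'⁻¹ = 1) (hq' : q⁻¹ + q'⁻¹ = 1)
    (Θ : Zd d → Zd d → Zd d → ℂ)
    (hΘ : nestNorm r (fun j : Zd d => nestNorm p' (fun k : Zd d =>
      nestNorm q' (fun l : Zd d => ENNReal.ofReal ‖Θ j k l‖))) ≠ ∞)
    (f g : Zd d → ℂ) (hf : lpNorm p f ≠ ∞) (hg : lpNorm q g ≠ ∞) :
    lpNorm r (Tbil Θ f g) ≤
      nestNorm r (fun j : Zd d => nestNorm p' (fun k : Zd d =>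
        nestNorm q' (fun l : Zd d => ENNReal.ofReal ‖Θ j k l‖))) *
      lpNorm p f * lpNorm q g :=
  stmt_1_general p q r p' q' hr hp' hq' Θ f g

end
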